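/- Let α be real with 1/2 < α ≤ 1/(2·P_lL) and define ξ̂(b) = Δ·(α − 1/2 + b/2) / ((P_lL·b + P_hL)·(P_lH·b + P_hH + 1)) for b ∈ [0, 1]. Then: (i) if α ≥ (1 + P_hL + P_hH·P_lL)/(2·(P_hH·P_lL + P_hL·P_lH + P_lL)), then for all b ∈ [0, 1], ξ̂(b) ≤ ξ̂(0) = Δ·(α − 1/2)/(P_hL·(P_hH + 1)); (ii) if (1 + P_hL + P_hH·P_lL)/(2·(P_hH·P_lL + P_hL·P_lH + P_lL)) > α > 1/(1 + P_lL + (P_lL − P_hH)), then b*(α) = (1 − 2α) + √(2·(1 − α·P_lH)·(1 − 2·α·P_lL)·P_lL·P_lH)/(P_lL·P_lH) lies in (0, 1), ξ̂(b*(α)) = ξ_NL(α), and ξ̂(b) ≤ ξ_NL(α) for all b ∈ [0, 1]; (iii) if α ≤ 1/(1 + P_lL + (P_lL − P_hH)), then for all b ∈ [0, 1], ξ̂(b) ≤ ξ̂(1) = (1/2)·Δ·α. -/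

import Mathlib

/-!
Substituting `t = b + 2α - 1` turns `ξ̂` into `(Δ / 2) · t / ((a t + p) (c t + q))` with
`a = P_lL`, `c = P_lH`, `p = 1 - 2α P_lL ≥ 0` and `q = 2 (1 - α P_lH) > 0`. Such a ratio increases
up to `t* = √(acpq) / (ac)` and decreases after it, because its denominator `D` satisfies
`s · D(t) - t · D(s) = (t - s) (ac·st - pq)`; by AM-GM its maximum is `1 / (aq + cp + 2√(acpq))`,
which is `ξ_NL` up to the factor `Δ / 2`. The three regimes of `α` are `t* ≤ 2α - 1` (`b = 0`),
`2α - 1 < t* < 2α`, and `2α ≤ t*` (`b = 1`); as conditions `pq ≤ ac (2α - 1)²` etc. they are linear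
in `α`, since the `α²` terms cancel.
-/

/-- ξ̂(b): the common value of ξ_h and ξ_l (at β_h^1 = 1) for the γ solving ξ_h = ξ_l. -/
noncomputable def xiHat (PhH PlH PhL PlL α b : ℝ) : ℝ :=
  (PhH - PhL) * (α - 1 / 2 + b / 2) /
    ((PlL * b + PhL) * (PlH * b + PhH + 1))

/-- b*(α): the maximizer of ξ̂ in the non-linear regime. -/
noncomputable def bStar (PlH PlL α : ℝ) : ℝ :=
  (1 - 2 * α) +
    Real.sqrt (2 * (1 - α * PlH) * (1 - 2 * α * PlL) * PlL * PlH) / (PlL * PlH)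

/-- ξ_NL(α): the non-linear segment of the threshold curve. -/
noncomputable def xiNL (PhH PlH PhL PlL α : ℝ) : ℝ :=
  (PhH - PhL) /
    (4 * Real.sqrt (2 * (1 - α * PlH) * (1 - 2 * α * PlL) * PlH * PlL)
      + 2 * PlH + 4 * PlL - 8 * α * PlH * PlL)

open Set

noncomputable def linProdRatio (a p c q t : ℝ) : ℝ := t / ((a * t + p) * (c * t + q))

noncomputable def linProdPeak (a p c q : ℝ) : ℝ := √(a * c * p * q) / (a * c)

noncomputable def linProdMax (a p c q : ℝ) : ℝ := 1 / (a * q + c * p + 2 * √(a * c * p * q))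

section LinProdRatio

variable {a p c q s t : ℝ}

lemma linProdRatio_le_linProdRatio_iff (ha : 0 < a) (hc : 0 < c) (hp : 0 ≤ p) (hq : 0 ≤ q)
    (hs : 0 < s) (ht : 0 < t) :
    linProdRatio a p c q t ≤ linProdRatio a p c q s ↔ 0 ≤ (t - s) * (a * c * s * t - p * q) := by
  have key : s * ((a * t + p) * (c * t + q)) - t * ((a * s + p) * (c * s + q)) =
      (t - s) * (a * c * s * t - p * q) := by ring
  rw [linProdRatio, linProdRatio, div_le_div_iff₀ (by positivity) (by positivity),
    ← sub_nonneg, key]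

lemma linProdRatio_antitoneOn (ha : 0 < a) (hc : 0 < c) (hp : 0 ≤ p) (hq : 0 ≤ q) (hs : 0 < s)
    (h : p * q ≤ a * c * s ^ 2) : AntitoneOn (linProdRatio a p c q) (Ici s) := by
  intro x hx y hy hxy
  rw [linProdRatio_le_linProdRatio_iff ha hc hp hq (hs.trans_le hx) (hs.trans_le hy)]
  have hsxy : s ^ 2 ≤ x * y := by nlinarith [mem_Ici.1 hx, mem_Ici.1 hy]
  exact mul_nonneg (sub_nonneg.2 hxy) (by nlinarith [mul_pos ha hc])

lemma linProdRatio_monotoneOn (ha : 0 < a) (hc : 0 < c) (hp : 0 ≤ p) (hq : 0 ≤ q)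
    (h : a * c * s ^ 2 ≤ p * q) : MonotoneOn (linProdRatio a p c q) (Ioc 0 s) := by
  rintro x ⟨hx₀, hxs⟩ y ⟨hy₀, hys⟩ hxy
  rw [linProdRatio_le_linProdRatio_iff ha hc hp hq hy₀ hx₀]
  have hxys : y * x ≤ s ^ 2 := by nlinarith
  exact mul_nonneg_of_nonpos_of_nonpos (sub_nonpos.2 hxy) (by nlinarith [mul_pos ha hc])

lemma linProdRatio_le (ha : 0 < a) (hc : 0 < c) (hp : 0 ≤ p) (hq : 0 < q) (ht : 0 < t) :
    linProdRatio a p c q t ≤ linProdMax a p c q := by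
  set S := √(a * c * p * q)
  have hS : S ^ 2 = a * c * p * q := Real.sq_sqrt (by positivity)
  rw [linProdRatio, linProdMax, div_le_div_iff₀ (by positivity) (by positivity)]
  have hsq : a * c * (t * (a * q + c * p + 2 * S)) + (a * c * t - S) ^ 2 =
      a * c * (1 * ((a * t + p) * (c * t + q))) := by linear_combination hS
  exact le_of_mul_le_mul_left (by linarith [sq_nonneg (a * c * t - S)]) (mul_pos ha hc)

lemma linProdRatio_linProdPeak (ha : 0 < a) (hc : 0 < c) (hp : 0 < p) (hq : 0 < q) :
    linProdRatio a p c q (linProdPeak a p c q) = linProdMax a p c q := by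
  have hS : √(a * c * p * q) ^ 2 = a * c * p * q := Real.sq_sqrt (by positivity)
  have hS₀ : 0 < √(a * c * p * q) := by positivity
  rw [linProdRatio, linProdPeak, linProdMax]
  field_simp
  linear_combination hS

lemma lt_linProdPeak_iff (ha : 0 < a) (hc : 0 < c) (ht : 0 ≤ t) :
    t < linProdPeak a p c q ↔ a * c * t ^ 2 < p * q := by
  rw [linProdPeak, lt_div_iff₀ (mul_pos ha hc), Real.lt_sqrt (by positivity)]
  constructor <;> intro h <;> nlinarith [mul_pos ha hc]

lemma linProdPeak_lt_iff (ha : 0 < a) (hc : 0 < c) (ht : 0 < t) :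
    linProdPeak a p c q < t ↔ p * q < a * c * t ^ 2 := by
  rw [linProdPeak, div_lt_iff₀ (mul_pos ha hc), Real.sqrt_lt' (by positivity)]
  constructor <;> intro h <;> nlinarith [mul_pos ha hc]

end LinProdRatio

section Signal

variable {PhH PlH PhL PlL α : ℝ}

lemma xiHat_eq_linProdRatio (hsH : PhH + PlH = 1) (hsL : PhL + PlL = 1) (b : ℝ) :
    xiHat PhH PlH PhL PlL α b = (PhH - PhL) / 2 *
      linProdRatio PlL (1 - 2 * α * PlL) PlH (2 * (1 - α * PlH)) (b + 2 * α - 1) := by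
  have h₁ : PlL * (b + 2 * α - 1) + (1 - 2 * α * PlL) = PlL * b + PhL := by linarith
  have h₂ : PlH * (b + 2 * α - 1) + 2 * (1 - α * PlH) = PlH * b + PhH + 1 := by linarith
  rw [xiHat, linProdRatio, h₁, h₂]
  ring

lemma xiHat_zero : xiHat PhH PlH PhL PlL α 0 = (PhH - PhL) * (α - 1 / 2) / (PhL * (PhH + 1)) := by
  simp [xiHat]

lemma xiHat_one (hsH : PhH + PlH = 1) (hsL : PhL + PlL = 1) :
    xiHat PhH PlH PhL PlL α 1 = (1 / 2) * (PhH - PhL) * α := by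
  have h : (PlL * 1 + PhL) * (PlH * 1 + PhH + 1) = 2 := by
    rw [mul_one, mul_one, add_comm PlL, hsL, add_comm PlH, hsH]; norm_num
  rw [xiHat, h]
  ring

lemma xiNL_eq_linProdMax :
    xiNL PhH PlH PhL PlL α =
      (PhH - PhL) / 2 * linProdMax PlL (1 - 2 * α * PlL) PlH (2 * (1 - α * PlH)) := by
  have h : 2 * (1 - α * PlH) * (1 - 2 * α * PlL) * PlH * PlL =
      PlL * PlH * (1 - 2 * α * PlL) * (2 * (1 - α * PlH)) := by ring
  rw [xiNL, linProdMax, h, div_mul_div_comm, mul_one]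
  congr 1
  ring

lemma bStar_add :
    bStar PlH PlL α + 2 * α - 1 =
      linProdPeak PlL (1 - 2 * α * PlL) PlH (2 * (1 - α * PlH)) := by
  have h : 2 * (1 - α * PlH) * (1 - 2 * α * PlL) * PlL * PlH =
      PlL * PlH * (1 - 2 * α * PlL) * (2 * (1 - α * PlH)) := by ring
  rw [bStar, linProdPeak, h]
  ring

lemma lowThreshold_le_iff (hsH : PhH + PlH = 1) (hsL : PhL + PlL = 1)
    (hden : 0 < 2 * (PhH * PlL + PhL * PlH + PlL)) :
    (1 + PhL + PhH * PlL) / (2 * (PhH * PlL + PhL * PlH + PlL)) ≤ α ↔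
      (1 - 2 * α * PlL) * (2 * (1 - α * PlH)) ≤ PlL * PlH * (2 * α - 1) ^ 2 := by
  have key : PlL * PlH * (2 * α - 1) ^ 2 - (1 - 2 * α * PlL) * (2 * (1 - α * PlH)) =
      α * (2 * (PhH * PlL + PhL * PlH + PlL)) - (1 + PhL + PhH * PlL) := by
    rw [← sub_eq_of_eq_add' hsH.symm, ← sub_eq_of_eq_add' hsL.symm]; ring
  rw [div_le_iff₀ hden, ← sub_nonneg, ← key, sub_nonneg]

lemma le_highThreshold_iff (hsH : PhH + PlH = 1) (hden : 0 < 1 + PlL + (PlL - PhH)) :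
    α ≤ 1 / (1 + PlL + (PlL - PhH)) ↔
      PlL * PlH * (2 * α) ^ 2 ≤ (1 - 2 * α * PlL) * (2 * (1 - α * PlH)) := by
  have key : (1 - 2 * α * PlL) * (2 * (1 - α * PlH)) - PlL * PlH * (2 * α) ^ 2 =
      2 * (1 - α * (1 + PlL + (PlL - PhH))) := by
    rw [← sub_eq_of_eq_add' hsH.symm]; ring
  rw [le_div_iff₀ hden, ← sub_nonneg, ← sub_nonneg (b := PlL * PlH * (2 * α) ^ 2), key]
  constructor <;> intro h <;> linarith

end Signal

theorem stmt_12_general (PhH PlH PhL PlL α : ℝ)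
    (hPhL : 0 < PhL) (hhh : PhL < PhH) (hHL : PhH ≤ PlL)
    (hsH : PhH + PlH = 1) (hsL : PhL + PlL = 1)
    (hα₁ : 1 / 2 < α) (hα₂ : α ≤ 1 / (2 * PlL)) :
    ((1 + PhL + PhH * PlL) / (2 * (PhH * PlL + PhL * PlH + PlL)) ≤ α →
      (∀ b : ℝ, 0 ≤ b → b ≤ 1 → xiHat PhH PlH PhL PlL α b ≤ xiHat PhH PlH PhL PlL α 0) ∧
      xiHat PhH PlH PhL PlL α 0 = (PhH - PhL) * (α - 1 / 2) / (PhL * (PhH + 1))) ∧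
    (α < (1 + PhL + PhH * PlL) / (2 * (PhH * PlL + PhL * PlH + PlL)) →
      1 / (1 + PlL + (PlL - PhH)) < α →
      (0 < bStar PlH PlL α ∧ bStar PlH PlL α < 1) ∧
      xiHat PhH PlH PhL PlL α (bStar PlH PlL α) = xiNL PhH PlH PhL PlL α ∧
      (∀ b : ℝ, 0 ≤ b → b ≤ 1 → xiHat PhH PlH PhL PlL α b ≤ xiNL PhH PlH PhL PlL α)) ∧
    (α ≤ 1 / (1 + PlL + (PlL - PhH)) →
      (∀ b : ℝ, 0 ≤ b → b ≤ 1 → xiHat PhH PlH PhL PlL α b ≤ xiHat PhH PlH PhL PlL α 1) ∧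
      xiHat PhH PlH PhL PlL α 1 = (1 / 2) * (PhH - PhL) * α) := by
  have hPlL₀ : 0 < PlL := by linarith
  have hPlH₀ : 0 < PlH := by linarith
  have hp : 0 ≤ 1 - 2 * α * PlL := by
    rw [le_div_iff₀ (by positivity)] at hα₂; linarith
  have hq : 0 < 2 * (1 - α * PlH) := by nlinarith
  have hΔ : 0 ≤ (PhH - PhL) / 2 := by linarith
  have hPhH₀ : 0 < PhH := by linarith
  have hlow := lowThreshold_le_iff (α := α) hsH hsL (by positivity)
  have hhigh := le_highThreshold_iff (α := α) (PlL := PlL) hsH (by linarith)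
  have hξ := xiHat_eq_linProdRatio (α := α) hsH hsL
  refine ⟨fun h => ⟨fun b hb _ => ?_, xiHat_zero⟩, fun h₁ h₂ => ?_,
    fun h => ⟨fun b hb₀ hb₁ => ?_, xiHat_one hsH hsL⟩⟩
  · rw [hξ, hξ, zero_add]
    exact mul_le_mul_of_nonneg_left (linProdRatio_antitoneOn hPlL₀ hPlH₀ hp hq.le
      (by linarith) (hlow.1 h) self_mem_Ici (mem_Ici.2 (by linarith)) (by linarith)) hΔ
  · rw [← not_le, hlow, not_le] at h₁
    rw [← not_le, hhigh, not_le] at h₂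
    have hp' : 0 < 1 - 2 * α * PlL := (pos_iff_pos_of_mul_pos (by nlinarith)).2 hq
    have hb := bStar_add (PlH := PlH) (PlL := PlL) (α := α)
    refine ⟨⟨?_, ?_⟩, ?_, fun b hb₀ _ => ?_⟩
    · linarith [(lt_linProdPeak_iff hPlL₀ hPlH₀ (by linarith)).2 h₁]
    · linarith [(linProdPeak_lt_iff hPlL₀ hPlH₀ (by linarith)).2 h₂]
    · rw [hξ, hb, linProdRatio_linProdPeak hPlL₀ hPlH₀ hp' hq, xiNL_eq_linProdMax]
    · rw [hξ, xiNL_eq_linProdMax]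
      exact mul_le_mul_of_nonneg_left (linProdRatio_le hPlL₀ hPlH₀ hp hq (by linarith)) hΔ
  · rw [hξ, hξ, add_sub_cancel_left]
    exact mul_le_mul_of_nonneg_left (linProdRatio_monotoneOn hPlL₀ hPlH₀ hp hq.le (hhigh.1 h)
      ⟨by linarith, by linarith⟩ ⟨by linarith, le_rfl⟩ (by linarith)) hΔ

/-- maximization of ξ̂ over b ∈ [0, 1] in the three regimes of α. -/
theorem stmt_12 (PhH PlH PhL PlL α : ℝ)
    (hPhL : 0 < PhL) (hhh : PhL < PhH) (hHL : PhH ≤ PlL) (hPlL : PlL < 1)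
    (hsH : PhH + PlH = 1) (hsL : PhL + PlL = 1)
    (hα₁ : 1 / 2 < α) (hα₂ : α ≤ 1 / (2 * PlL)) :
    ((1 + PhL + PhH * PlL) / (2 * (PhH * PlL + PhL * PlH + PlL)) ≤ α →
      (∀ b : ℝ, 0 ≤ b → b ≤ 1 → xiHat PhH PlH PhL PlL α b ≤ xiHat PhH PlH PhL PlL α 0) ∧
      xiHat PhH PlH PhL PlL α 0 = (PhH - PhL) * (α - 1 / 2) / (PhL * (PhH + 1))) ∧
    (α < (1 + PhL + PhH * PlL) / (2 * (PhH * PlL + PhL * PlH + PlL)) →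
      1 / (1 + PlL + (PlL - PhH)) < α →
      (0 < bStar PlH PlL α ∧ bStar PlH PlL α < 1) ∧
      xiHat PhH PlH PhL PlL α (bStar PlH PlL α) = xiNL PhH PlH PhL PlL α ∧
      (∀ b : ℝ, 0 ≤ b → b ≤ 1 → xiHat PhH PlH PhL PlL α b ≤ xiNL PhH PlH PhL PlL α)) ∧
    (α ≤ 1 / (1 + PlL + (PlL - PhH)) →
      (∀ b : ℝ, 0 ≤ b → b ≤ 1 → xiHat PhH PlH PhL PlL α b ≤ xiHat PhH PlH PhL PlL α 1) ∧
      xiHat PhH PlH PhL PlL α 1 = (1 / 2) * (PhH - PhL) * α) :=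
  stmt_12_general PhH PlH PhL PlL α hPhL hhh hHL hsH hsL hα₁ hα₂
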